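/- The Fourier transform of the Laguerre–Gaussian Wigner function satisfies the self-similarity relation Ψ̂_k(w) = ((−1)^k / 2) Ψ_k(w/2) for all w ∈ ℝ² and k ∈ ℤ_{≥0}, where Ψ_k(x,ξ) = (1/π)(−1)^k L_k(2(x²+ξ²)) e^{−(x²+ξ²)} and the Fourier transform is û(ζ) = (2π)^{−1} ∫_{ℝ²} e^{−iζ·w} u(w) dw. -/

import Mathlib

open Finset MeasureTheory Real Complex

/-- The Laguerre polynomial `L_k(t) = Σ_{ℓ=0}^k C(k,ℓ)(-t)^ℓ/ℓ!`. -/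
noncomputable def laguerre (k : ℕ) (t : ℝ) : ℝ :=
  ∑ ℓ ∈ Finset.range (k + 1), (Nat.choose k ℓ : ℝ) * (-t) ^ ℓ / (Nat.factorial ℓ)

/-- The Laguerre–Gaussian Wigner function
`Ψ_k(x,ξ) = (1/π)(-1)^k L_k(2(x²+ξ²)) e^{-(x²+ξ²)}`. -/
noncomputable def wignerHermite (k : ℕ) (w : ℝ × ℝ) : ℝ :=
  (1 / Real.pi) * (-1) ^ k * laguerre k (2 * (w.1 ^ 2 + w.2 ^ 2)) *
    Real.exp (-(w.1 ^ 2 + w.2 ^ 2))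


/-- negative of the derivative of `laguerre k` -/
noncomputable def lagD (k : ℕ) (t : ℝ) : ℝ :=
  ∑ j ∈ Finset.range k, (Nat.choose k (j+1) : ℝ) * (-t) ^ j / (Nat.factorial j)

lemma hasDerivAt_laguerre (k : ℕ) (t : ℝ) :
    HasDerivAt (laguerre k) (-(lagD k t)) t := by
  have h : ∀ ℓ ∈ Finset.range (k+1), HasDerivAt
      (fun t : ℝ => (Nat.choose k ℓ : ℝ) * (-t) ^ ℓ / (Nat.factorial ℓ))
      ((Nat.choose k ℓ : ℝ) * ((ℓ : ℝ) * (-t) ^ (ℓ-1) * (-1)) / (Nat.factorial ℓ)) t := by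
    intro ℓ _
    have h1 : HasDerivAt (fun t : ℝ => (-t) ^ ℓ) ((ℓ : ℝ) * (-t) ^ (ℓ-1) * (-1)) t := by
      exact (hasDerivAt_pow ℓ (-t)).comp t (hasDerivAt_neg t)
    simpa [mul_div_assoc] using ((h1.const_mul ((Nat.choose k ℓ : ℝ))).div_const _)
  have H := HasDerivAt.fun_sum h
  refine H.congr_deriv ?_
  symm
  rw [Finset.sum_range_succ' _ k]
  simp only [Nat.cast_zero, pow_zero, Nat.factorial_zero, Nat.cast_one, zero_mul, mul_zero,
    zero_div, add_zero, zero_mul, mul_zero]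
  rw [lagD, neg_eq_iff_eq_neg, ← Finset.sum_neg_distrib]
  refine Finset.sum_congr rfl fun j _ => ?_
  have hfac : (Nat.factorial (j+1) : ℝ) = (j+1) * Nat.factorial j := by
    push_cast [Nat.factorial_succ]; ring
  simp only [Nat.add_sub_cancel, hfac, Nat.cast_add, Nat.cast_one]
  field_simp [hfac]

lemma lag_rec (ℓ : ℕ) (s : ℝ) :
    ((ℓ:ℝ)+1) * laguerre (ℓ+1) s
      = -s * lagD ℓ s - s * laguerre ℓ s + ((ℓ:ℝ)+1) * laguerre ℓ s := by
  -- write everything as sums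
  have hlagD : -s * lagD ℓ s = ∑ j ∈ Finset.range (ℓ+1),
      (Nat.choose ℓ (j+1) : ℝ) * (-s) ^ (j+1) / (Nat.factorial j) := by
    rw [Finset.sum_range_succ, Nat.choose_succ_self]
    rw [lagD, Finset.mul_sum]
    simp only [Nat.cast_zero, zero_mul, zero_div, add_zero]
    refine Finset.sum_congr rfl fun j _ => ?_
    rw [pow_succ]
    ring
  have hlag2 : -s * laguerre ℓ s = ∑ j ∈ Finset.range (ℓ+1),
      (Nat.choose ℓ j : ℝ) * (-s) ^ (j+1) / (Nat.factorial j) := by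
    rw [laguerre, Finset.mul_sum]
    refine Finset.sum_congr rfl fun j _ => ?_
    rw [pow_succ]
    ring
  have hre : -s * lagD ℓ s - s * laguerre ℓ s + ((ℓ:ℝ)+1) * laguerre ℓ s
      = (-s * lagD ℓ s + -s * laguerre ℓ s) + ((ℓ:ℝ)+1) * laguerre ℓ s := by ring
  rw [hre, hlagD, hlag2, ← Finset.sum_add_distrib]
  have hcomb : ∀ j ∈ Finset.range (ℓ+1),
      (Nat.choose ℓ (j+1) : ℝ) * (-s) ^ (j+1) / (Nat.factorial j)
        + (Nat.choose ℓ j : ℝ) * (-s) ^ (j+1) / (Nat.factorial j)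
      = (Nat.choose (ℓ+1) (j+1) : ℝ) * (-s) ^ (j+1) / (Nat.factorial j) := by
    intro j _
    rw [Nat.choose_succ_succ (ℓ) (j)] -- C(ℓ+1,j+1) = C(ℓ,j) + C(ℓ,j+1)
    push_cast
    ring
  rw [Finset.sum_congr rfl hcomb]
  -- now LHS
  rw [laguerre, laguerre, Finset.mul_sum, Finset.mul_sum,
    Finset.sum_range_succ' (fun m => ((ℓ:ℝ)+1) * ((Nat.choose (ℓ+1) m : ℝ) * (-s) ^ m / (Nat.factorial m))) (ℓ+1)]
  simp only [pow_zero, Nat.factorial_zero, Nat.cast_one, Nat.choose_zero_right, mul_one, one_div]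
  have key : ∀ j ∈ Finset.range (ℓ+1),
      ((ℓ:ℝ)+1) * ((Nat.choose (ℓ+1) (j+1) : ℝ) * (-s) ^ (j+1) / (Nat.factorial (j+1)))
      = (Nat.choose (ℓ+1) (j+1) : ℝ) * (-s) ^ (j+1) / (Nat.factorial j)
        + ((ℓ:ℝ)+1) * ((Nat.choose ℓ (j+1) : ℝ) * (-s) ^ (j+1) / (Nat.factorial (j+1))) := by
    intro j _
    have hpas : (Nat.choose (ℓ+1) (j+1) : ℝ) = (Nat.choose ℓ j : ℝ) + (Nat.choose ℓ (j+1) : ℝ) := by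
      rw [Nat.choose_succ_succ]; push_cast; ring
    have hsm : ((ℓ:ℝ)+1) * (Nat.choose ℓ j : ℝ) = (Nat.choose (ℓ+1) (j+1) : ℝ) * ((j:ℝ)+1) := by
      have := Nat.add_one_mul_choose_eq ℓ j
      exact_mod_cast congrArg (Nat.cast : ℕ → ℝ) this
    have hfac : (Nat.factorial (j+1) : ℝ) = ((j:ℝ)+1) * Nat.factorial j := by
      push_cast [Nat.factorial_succ]; ring
    have hj1 : ((j:ℝ)+1) ≠ 0 := by positivity
    have hf : (Nat.factorial j : ℝ) ≠ 0 := by positivity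
    have hkey : ((ℓ:ℝ)+1) * ((Nat.choose (ℓ+1) (j+1) : ℝ) * (-s)^(j+1) / (Nat.factorial (j+1)))
        - ((ℓ:ℝ)+1) * ((Nat.choose ℓ (j+1) : ℝ) * (-s)^(j+1) / (Nat.factorial (j+1)))
        = (Nat.choose (ℓ+1) (j+1) : ℝ) * (-s)^(j+1) / (Nat.factorial j) := by
      rw [hfac, show ((ℓ:ℝ)+1) * ((Nat.choose (ℓ+1) (j+1) : ℝ) * (-s)^(j+1) / (((j:ℝ)+1) * Nat.factorial j))
          - ((ℓ:ℝ)+1) * ((Nat.choose ℓ (j+1) : ℝ) * (-s)^(j+1) / (((j:ℝ)+1) * Nat.factorial j))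
          = ((ℓ:ℝ)+1) * ((Nat.choose (ℓ+1) (j+1) : ℝ) - (Nat.choose ℓ (j+1) : ℝ)) * (-s)^(j+1)
            / (((j:ℝ)+1) * Nat.factorial j) by ring,
        hpas, add_sub_cancel_right, hsm, div_eq_div_iff (by positivity) hf]
      linear_combination (((j:ℝ)+1) * (-s)^(j+1) * (Nat.factorial j : ℝ)) * hpas
    linear_combination hkey
  rw [Finset.sum_congr rfl key, Finset.sum_add_distrib]
  rw [Finset.sum_range_succ' (fun i => ((ℓ:ℝ)+1) * ((Nat.choose ℓ i:ℝ) * (-s)^i / (Nat.factorial i))) ℓ,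
    Finset.sum_range_succ (fun x => ((ℓ:ℝ)+1) * ((Nat.choose ℓ (x+1):ℝ) * (-s)^(x+1) / (Nat.factorial (x+1)))) ℓ]
  simp [Nat.choose_succ_self]
  ring

lemma lag_inner_sum (k m : ℕ) (hm : m ≤ k) :
    ∑ ℓ ∈ Finset.range (k+1), (Nat.choose k ℓ : ℝ) * (Nat.choose ℓ m : ℝ) * (-2)^ℓ
      = (Nat.choose k m : ℝ) * (-2)^m * (-1)^(k-m) := by
  rw [Finset.range_eq_Ico, ← Finset.sum_Ico_consecutive _ (Nat.zero_le m) (by omega : m ≤ k+1)]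
  have h1 : ∑ ℓ ∈ Finset.Ico 0 m, (Nat.choose k ℓ : ℝ) * (Nat.choose ℓ m : ℝ) * (-2)^ℓ = 0 := by
    apply Finset.sum_eq_zero
    intro ℓ hℓ
    rw [Finset.mem_Ico] at hℓ
    rw [Nat.choose_eq_zero_of_lt hℓ.2]
    simp
  rw [h1, zero_add, Finset.sum_Ico_eq_sum_range]
  have h2 : ∀ j ∈ Finset.range (k+1-m),
      (Nat.choose k (m+j) : ℝ) * (Nat.choose (m+j) m : ℝ) * (-2)^(m+j)
      = ((Nat.choose k m : ℝ) * (-2)^m) * ((Nat.choose (k-m) j : ℝ) * (-2)^j) := by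
    intro j hj
    rw [Finset.mem_range] at hj
    have hkj : m + j ≤ k := by omega
    have := Nat.choose_mul (n := k) (Nat.le_add_right m j)
    have hcast : (Nat.choose k (m+j) : ℝ) * (Nat.choose (m+j) m : ℝ)
        = (Nat.choose k m : ℝ) * (Nat.choose (k-m) (m+j-m) : ℝ) := by exact_mod_cast congrArg (Nat.cast : ℕ → ℝ) this
    rw [hcast, Nat.add_sub_cancel_left, pow_add]
    ring
  rw [Finset.sum_congr rfl h2, ← Finset.mul_sum]
  have h3 : ∑ j ∈ Finset.range (k+1-m), (Nat.choose (k-m) j : ℝ) * (-2)^j = (-1)^(k-m) := by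
    have hb := add_pow (-2 : ℝ) 1 (k-m)
    have hn : k+1-m = (k-m)+1 := by omega
    rw [hn]
    norm_num at hb
    have hc : ∑ j ∈ Finset.range (k-m+1), (Nat.choose (k-m) j : ℝ) * (-2)^j
        = ∑ j ∈ Finset.range (k-m+1), (-2:ℝ)^j * (Nat.choose (k-m) j : ℝ) :=
      Finset.sum_congr rfl fun j _ => mul_comm _ _
    rw [hc, ← hb]
  rw [h3]

lemma lag_sum (k : ℕ) (t : ℝ) :
    ∑ ℓ ∈ Finset.range (k+1), (Nat.choose k ℓ : ℝ) * (-2)^ℓ * laguerre ℓ t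
      = (-1)^k * laguerre k (2*t) := by
  have expand : ∀ ℓ ∈ Finset.range (k+1),
      (Nat.choose k ℓ : ℝ) * (-2)^ℓ * laguerre ℓ t
      = ∑ m ∈ Finset.range (k+1),
          (Nat.choose k ℓ : ℝ) * (Nat.choose ℓ m : ℝ) * (-2)^ℓ * ((-t)^m / (Nat.factorial m)) := by
    intro ℓ hℓ
    rw [Finset.mem_range] at hℓ
    rw [laguerre, Finset.mul_sum]
    rw [← Finset.sum_subset (Finset.range_subset_range.2 (by omega : ℓ+1 ≤ k+1))]
    · exact Finset.sum_congr rfl fun m _ => by ring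
    · intro m _ hm
      rw [Finset.mem_range, not_lt] at hm
      rw [Nat.choose_eq_zero_of_lt (show ℓ < m by omega)]
      simp
  rw [Finset.sum_congr rfl expand, Finset.sum_comm]
  have swap : ∀ m ∈ Finset.range (k+1),
      ∑ ℓ ∈ Finset.range (k+1), (Nat.choose k ℓ : ℝ) * (Nat.choose ℓ m : ℝ) * (-2)^ℓ * ((-t)^m / (Nat.factorial m))
      = ((Nat.choose k m : ℝ) * (-2)^m * (-1)^(k-m)) * ((-t)^m / (Nat.factorial m)) := by
    intro m hm
    rw [Finset.mem_range] at hm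
    rw [← Finset.sum_mul, lag_inner_sum k m (by omega)]
  rw [Finset.sum_congr rfl swap, laguerre, Finset.mul_sum]
  refine Finset.sum_congr rfl fun m hm => ?_
  rw [Finset.mem_range] at hm
  have hsgn : (-1:ℝ)^(k-m) * (-1)^m = (-1)^k := by
    rw [← pow_add]; congr 1; omega
  have h2t : (-(2*t))^m = (-1)^m * 2^m * t^m := by
    rw [neg_pow, mul_pow]; ring
  have hneg2 : (-2:ℝ)^m = (-1)^m * 2^m := by rw [neg_pow]
  have hnt : (-t:ℝ)^m = (-1)^m * t^m := by rw [neg_pow]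
  rw [h2t, hneg2, hnt]
  linear_combination ((Nat.choose k m : ℝ) * 2^m * t^m * (-1)^m / (Nat.factorial m)) * hsgn

lemma integrable_pow_gauss {b : ℝ} (hb : 0 < b) (n : ℕ) :
    Integrable (fun x : ℝ => |x| ^ n * Real.exp (-b * x^2)) := by
  have h := integrable_rpow_mul_exp_neg_mul_sq hb (show (-1:ℝ) < n from lt_of_lt_of_le (by norm_num) (Nat.cast_nonneg n))
  have h2 : Integrable (fun x : ℝ => x ^ n * Real.exp (-b * x^2)) := by
    simpa [Real.rpow_natCast] using h
  simpa [abs_mul, _root_.abs_pow, Real.abs_exp] using h2.norm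

lemma integrable_radial {b : ℝ} (hb : 0 < b) (ℓ : ℕ) :
    Integrable (fun u : ℝ × ℝ => (u.1^2 + u.2^2)^ℓ * Real.exp (-b * (u.1^2 + u.2^2))) := by
  have heq : ∀ u : ℝ × ℝ, (u.1^2 + u.2^2)^ℓ * Real.exp (-b * (u.1^2 + u.2^2))
      = ∑ a ∈ Finset.range (ℓ+1),
        (Nat.choose ℓ a : ℝ) * (((u.1^2)^a * Real.exp (-b * u.1^2)) * ((u.2^2)^(ℓ-a) * Real.exp (-b * u.2^2))) := by
    intro u
    rw [add_pow]
    rw [Finset.sum_mul]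
    refine Finset.sum_congr rfl fun a ha => ?_
    rw [show -b * (u.1^2 + u.2^2) = -b*u.1^2 + -b*u.2^2 by ring, Real.exp_add]
    ring
  simp_rw [heq]
  apply integrable_finset_sum
  intro a _
  apply Integrable.const_mul
  rw [MeasureTheory.Measure.volume_eq_prod]
  have h1 : Integrable (fun x : ℝ => (x^2)^a * Real.exp (-b * x^2)) := by
    simpa [pow_mul, _root_.abs_pow, sq_abs] using integrable_pow_gauss hb (2*a)
  have h2 : Integrable (fun x : ℝ => (x^2)^(ℓ-a) * Real.exp (-b * x^2)) := by
    simpa [pow_mul, _root_.abs_pow, sq_abs] using integrable_pow_gauss hb (2*(ℓ-a))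
  exact h1.mul_prod h2

lemma integrand_cont (a b c : ℝ) (ℓ : ℕ) :
    Continuous (fun u : ℝ × ℝ =>
      (((u.1^2+u.2^2)^ℓ * Real.exp (-c*(u.1^2+u.2^2)) : ℝ) : ℂ)
        * Complex.exp (-Complex.I * ((a*u.1+b*u.2 : ℝ) : ℂ))) := by
  fun_prop

lemma norm_integrand (a b c : ℝ) (ℓ : ℕ) (u : ℝ × ℝ) :
    ‖(((u.1^2+u.2^2)^ℓ * Real.exp (-c*(u.1^2+u.2^2)) : ℝ) : ℂ)
        * Complex.exp (-Complex.I * ((a*u.1+b*u.2 : ℝ) : ℂ))‖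
      = (u.1^2+u.2^2)^ℓ * Real.exp (-c*(u.1^2+u.2^2)) := by
  rw [norm_mul, Complex.norm_exp]
  have : (-Complex.I * ((a*u.1+b*u.2 : ℝ) : ℂ)).re = 0 := by simp
  rw [this, Real.exp_zero, mul_one, Complex.norm_real, Real.norm_eq_abs, _root_.abs_of_nonneg (by positivity)]

lemma integrable_integrand (a b : ℝ) {c : ℝ} (hc : 0 < c) (ℓ : ℕ) :
    Integrable (fun u : ℝ × ℝ =>
      (((u.1^2+u.2^2)^ℓ * Real.exp (-c*(u.1^2+u.2^2)) : ℝ) : ℂ)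
        * Complex.exp (-Complex.I * ((a*u.1+b*u.2 : ℝ) : ℂ))) := by
  apply Integrable.mono' (integrable_radial hc ℓ) ((integrand_cont a b c ℓ).aestronglyMeasurable)
  exact Filter.Eventually.of_forall fun u => le_of_eq (norm_integrand a b c ℓ u)

noncomputable def lgi (a b : ℝ) (ℓ : ℕ) (c : ℝ) : ℂ :=
  ∫ u : ℝ × ℝ, (((u.1^2+u.2^2)^ℓ * Real.exp (-c*(u.1^2+u.2^2)) : ℝ) : ℂ)
      * Complex.exp (-Complex.I * ((a*u.1+b*u.2 : ℝ) : ℂ))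

-- 1D Gaussian Fourier integral
lemma gauss1D (a : ℝ) {c : ℝ} (hc : 0 < c) :
    ∫ x : ℝ, ((Real.exp (-c*x^2) : ℝ) : ℂ) * Complex.exp (-Complex.I * ((a*x : ℝ) : ℂ))
      = ((Real.pi : ℂ)/(c:ℂ)) ^ (1/2 : ℂ) * Complex.exp (-(a:ℂ)^2/(4*(c:ℂ))) := by
  have h := fourierIntegral_gaussian (show 0 < ((c:ℂ)).re by simpa using hc) (-(a:ℂ))
  have heq : ∀ x : ℝ, Complex.exp (Complex.I * (-(a:ℂ)) * (x:ℂ)) * Complex.exp (-(c:ℂ) * (x:ℂ)^2)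
      = ((Real.exp (-c*x^2) : ℝ) : ℂ) * Complex.exp (-Complex.I * ((a*x : ℝ) : ℂ)) := by
    intro x
    rw [Complex.ofReal_exp]
    push_cast
    rw [mul_comm]
    ring_nf
  rw [← integral_congr_ae (Filter.Eventually.of_forall heq), h]
  norm_num

lemma lgi_zero (a b : ℝ) {c : ℝ} (hc : 0 < c) :
    lgi a b 0 c = ((Real.pi : ℂ)/(c:ℂ)) * Complex.exp (-(((a^2+b^2 : ℝ)):ℂ)/(4*(c:ℂ))) := by
  have hsplit : ∀ u : ℝ × ℝ,
      (((u.1^2+u.2^2)^0 * Real.exp (-c*(u.1^2+u.2^2)) : ℝ) : ℂ)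
        * Complex.exp (-Complex.I * ((a*u.1+b*u.2 : ℝ) : ℂ))
      = (((Real.exp (-c*u.1^2) : ℝ) : ℂ) * Complex.exp (-Complex.I * ((a*u.1 : ℝ) : ℂ)))
        * (((Real.exp (-c*u.2^2) : ℝ) : ℂ) * Complex.exp (-Complex.I * ((b*u.2 : ℝ) : ℂ))) := by
    intro u
    rw [pow_zero, one_mul, show -c*(u.1^2+u.2^2) = -c*u.1^2 + -c*u.2^2 by ring, Real.exp_add]
    push_cast
    rw [← Complex.exp_add, ← Complex.exp_add]
    ring_nf
    rw [← Complex.exp_add, ← Complex.exp_add, ← Complex.exp_add]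
    congr 1
    ring
  rw [lgi, integral_congr_ae (Filter.Eventually.of_forall hsplit),
    MeasureTheory.Measure.volume_eq_prod,
    integral_prod_mul (f := fun x : ℝ => ((Real.exp (-c*x^2) : ℝ) : ℂ) * Complex.exp (-Complex.I * ((a*x : ℝ) : ℂ)))
      (g := fun y : ℝ => ((Real.exp (-c*y^2):ℝ):ℂ) * Complex.exp (-Complex.I * ((b*y : ℝ) : ℂ))),
    gauss1D a hc, gauss1D b hc]
  have hne : ((Real.pi : ℂ)/(c:ℂ)) ≠ 0 := by
    apply div_ne_zero
    · exact_mod_cast Real.pi_ne_zero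
    · exact_mod_cast hc.ne'
  rw [show (((Real.pi : ℂ)/(c:ℂ)) ^ (1/2 : ℂ) * Complex.exp (-(a:ℂ)^2/(4*(c:ℂ))))
      * (((Real.pi : ℂ)/(c:ℂ)) ^ (1/2 : ℂ) * Complex.exp (-(b:ℂ)^2/(4*(c:ℂ))))
      = (((Real.pi : ℂ)/(c:ℂ)) ^ (1/2 : ℂ) * ((Real.pi : ℂ)/(c:ℂ)) ^ (1/2 : ℂ))
        * (Complex.exp (-(a:ℂ)^2/(4*(c:ℂ))) * Complex.exp (-(b:ℂ)^2/(4*(c:ℂ)))) by ring,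
    ← Complex.cpow_add _ _ hne, ← Complex.exp_add]
  norm_num
  left
  congr 1
  ring

-- assume imports of p4 lemmas (copied here minimal for check)
lemma lgi_deriv (a b : ℝ) (ℓ : ℕ) {c : ℝ} (hc : 0 < c) :
    HasDerivAt (lgi a b ℓ) (-(lgi a b (ℓ+1) c)) c := by
  set F : ℝ → ℝ × ℝ → ℂ := fun c' u =>
    (((u.1^2+u.2^2)^ℓ * Real.exp (-c'*(u.1^2+u.2^2)) : ℝ) : ℂ)
      * Complex.exp (-Complex.I * ((a*u.1+b*u.2 : ℝ) : ℂ)) with hF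
  set F' : ℝ → ℝ × ℝ → ℂ := fun c' u =>
    -((((u.1^2+u.2^2)^(ℓ+1) * Real.exp (-c'*(u.1^2+u.2^2)) : ℝ) : ℂ)
      * Complex.exp (-Complex.I * ((a*u.1+b*u.2 : ℝ) : ℂ))) with hF'
  have hε : (0:ℝ) < c/2 := by linarith
  have key := hasDerivAt_integral_of_dominated_loc_of_deriv_le (μ := (volume : Measure (ℝ×ℝ)))
    (F := F) (F' := F') (x₀ := c)
    (bound := fun u => (u.1^2+u.2^2)^(ℓ+1) * Real.exp (-(c/2)*(u.1^2+u.2^2))) (Metric.ball_mem_nhds c hε)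
    (Filter.Eventually.of_forall fun c' => (integrand_cont a b c' ℓ).aestronglyMeasurable)
    (integrable_integrand a b hc ℓ)
    ((integrand_cont a b c (ℓ+1)).neg.aestronglyMeasurable)
    (Filter.Eventually.of_forall fun u => ?_) (integrable_radial (by linarith) (ℓ+1))
    (Filter.Eventually.of_forall fun u => ?_)
  · have : (∫ u : ℝ × ℝ, F' c u) = -(lgi a b (ℓ+1) c) := by
      simp only [lgi, hF', ← integral_neg]
    rw [this] at key
    exact key.2
  · -- bound
    intro c' hc'
    rw [Metric.mem_ball, Real.dist_eq] at hc'
    have h2 : c/2 ≤ c' := by cases abs_lt.1 hc'; linarith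
    rw [hF', norm_neg, norm_integrand]
    have : Real.exp (-c'*(u.1^2+u.2^2)) ≤ Real.exp (-(c/2)*(u.1^2+u.2^2)) := by
      apply Real.exp_le_exp.2
      nlinarith [sq_nonneg u.1, sq_nonneg u.2]
    have hp : (0:ℝ) ≤ (u.1^2+u.2^2)^(ℓ+1) := by positivity
    exact mul_le_mul_of_nonneg_left this hp
  · -- differentiability
    intro c' hc'
    have hreal : HasDerivAt (fun c'' : ℝ => (u.1^2+u.2^2)^ℓ * Real.exp (-c''*(u.1^2+u.2^2)))
        (-((u.1^2+u.2^2)^(ℓ+1) * Real.exp (-c'*(u.1^2+u.2^2)))) c' := by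
      have h1 : HasDerivAt (fun c'' : ℝ => -c''*(u.1^2+u.2^2)) (-(u.1^2+u.2^2)) c' := by
        have h0 := ((hasDerivAt_id c').mul_const (u.1^2+u.2^2)).neg
        simp only [← neg_mul, one_mul] at h0
        exact h0.congr_of_eventuallyEq (Filter.Eventually.of_forall fun y => by simp)
      have h2 := (Real.hasDerivAt_exp (-c'*(u.1^2+u.2^2))).comp c' h1
      have h3 := h2.const_mul ((u.1^2+u.2^2)^ℓ)
      refine h3.congr_deriv ?_
      rw [pow_succ]
      ring
    have hC := (hreal.ofReal_comp).mul_const (Complex.exp (-Complex.I * ((a*u.1+b*u.2 : ℝ) : ℂ)))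
    refine hC.congr_deriv ?_
    rw [hF']
    push_cast
    ring

noncomputable def lgr (ρ : ℝ) (ℓ : ℕ) (c : ℝ) : ℝ :=
  Real.pi * (Nat.factorial ℓ) * laguerre ℓ (ρ/(4*c)) * Real.exp (-(ρ/(4*c))) / c^(ℓ+1)

lemma lgr_deriv (ρ : ℝ) (ℓ : ℕ) {c : ℝ} (hc : 0 < c) :
    HasDerivAt (lgr ρ ℓ) (-(lgr ρ (ℓ+1) c)) c := by
  have hc4 : (4*c : ℝ) ≠ 0 := by positivity
  have hcne : (c : ℝ) ≠ 0 := hc.ne'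
  have h4 : HasDerivAt (fun c' : ℝ => 4*c') 4 c := by
    simpa using (hasDerivAt_id c).const_mul (4:ℝ)
  have hs : HasDerivAt (fun c' : ℝ => ρ/(4*c')) ((0 * (4*c) - ρ * 4)/(4*c)^2) c :=
    (hasDerivAt_const c ρ).div h4 hc4
  have hL : HasDerivAt (fun c' : ℝ => laguerre ℓ (ρ/(4*c')))
      (-(lagD ℓ (ρ/(4*c))) * ((0 * (4*c) - ρ * 4)/(4*c)^2)) c :=
    by have := (hasDerivAt_laguerre ℓ (ρ/(4*c))).comp c hs; exact this
  have hE : HasDerivAt (fun c' : ℝ => Real.exp (-(ρ/(4*c'))))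
      (Real.exp (-(ρ/(4*c))) * (-((0 * (4*c) - ρ * 4)/(4*c)^2))) c :=
    (Real.hasDerivAt_exp _).comp c hs.neg
  have hP : HasDerivAt (fun c' : ℝ => c'^(ℓ+1)) (((ℓ:ℝ)+1) * c^ℓ) c := by
    simpa using hasDerivAt_pow (ℓ+1) c
  have hPne : (c:ℝ)^(ℓ+1) ≠ 0 := by positivity
  have h1 := (hL.const_mul (Real.pi * (Nat.factorial ℓ))).mul hE
  have h3 := h1.div hP hPne
  refine h3.congr_deriv ?_
  symm
  have hrec := lag_rec ℓ (ρ/(4*c))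
  have hfa : ((Nat.factorial (ℓ+1) : ℝ)) = ((ℓ:ℝ)+1) * (Nat.factorial ℓ) := by
    push_cast [Nat.factorial_succ]; ring
  have hsolve : laguerre (ℓ+1) (ρ/(4*c))
      = (-(ρ/(4*c)) * lagD ℓ (ρ/(4*c)) - (ρ/(4*c)) * laguerre ℓ (ρ/(4*c))
          + ((ℓ:ℝ)+1) * laguerre ℓ (ρ/(4*c))) / ((ℓ:ℝ)+1) := by
    rw [eq_div_iff (by positivity : ((ℓ:ℝ)+1) ≠ 0)]
    linarith [hrec]
  simp only [lgr]
  rw [hfa, hsolve]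
  simp only [Pi.mul_apply]
  field_simp
  ring

lemma lgi_eq_lgr (a b : ℝ) (ℓ : ℕ) : ∀ c : ℝ, 0 < c →
    lgi a b ℓ c = ((lgr (a^2+b^2) ℓ c : ℝ) : ℂ) := by
  induction ℓ with
  | zero =>
    intro c hc
    rw [lgi_zero a b hc]
    simp only [lgr, laguerre]
    norm_num
    rw [div_mul_eq_mul_div]
    congr 2
    ring
  | succ ℓ ih =>
    intro c hc
    have hA := lgi_deriv a b ℓ hc
    have hB := (lgr_deriv (a^2+b^2) ℓ hc).ofReal_comp
    have heq : (fun c' => ((lgr (a^2+b^2) ℓ c' : ℝ) : ℂ)) =ᶠ[nhds c] (lgi a b ℓ) := by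
      filter_upwards [eventually_gt_nhds hc] with c' hc'
      exact (ih c' hc').symm
    have hB' : HasDerivAt (lgi a b ℓ) (((-(lgr (a^2+b^2) (ℓ+1) c) : ℝ)) : ℂ) c :=
      hB.congr_of_eventuallyEq heq.symm
    have := hA.unique hB'
    rw [Complex.ofReal_neg] at this
    have h2 := neg_injective this
    push_cast
    exact h2

/-- The Fourier transform `û(ζ) = (2π)⁻¹ ∫_{ℝ²} e^{-iζ·w} u(w) dw` of `Ψ_k` satisfies
`Ψ̂_k(w) = ((-1)^k/2) Ψ_k(w/2)`. -/
theorem fourier_wignerHermite (k : ℕ) (w : ℝ × ℝ) :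
    (2 * Real.pi : ℂ)⁻¹ *
        (∫ u : ℝ × ℝ, Complex.exp (-Complex.I * ((w.1 * u.1 + w.2 * u.2 : ℝ) : ℂ)) *
          (wignerHermite k u : ℂ))
      = (((-1) ^ k / 2 : ℝ) : ℂ) * (wignerHermite k (w.1 / 2, w.2 / 2) : ℂ) := by
  -- pointwise expansion of the integrand as finite sum
  have hpt : ∀ u : ℝ × ℝ,
      Complex.exp (-Complex.I * ((w.1 * u.1 + w.2 * u.2 : ℝ) : ℂ)) * (wignerHermite k u : ℂ)
      = ∑ ℓ ∈ Finset.range (k+1),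
          ((1/Real.pi * (-1:ℝ)^k * (Nat.choose k ℓ) * (-2)^ℓ / (Nat.factorial ℓ) : ℝ) : ℂ)
          * ((((u.1^2+u.2^2)^ℓ * Real.exp (-1*(u.1^2+u.2^2)) : ℝ) : ℂ)
              * Complex.exp (-Complex.I * ((w.1*u.1+w.2*u.2 : ℝ) : ℂ))) := by
    intro u
    have hreal : wignerHermite k u = ∑ ℓ ∈ Finset.range (k+1),
        (1/Real.pi * (-1:ℝ)^k * (Nat.choose k ℓ) * (-2)^ℓ / (Nat.factorial ℓ))
          * ((u.1^2+u.2^2)^ℓ * Real.exp (-1*(u.1^2+u.2^2))) := by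
      rw [wignerHermite, laguerre, Finset.mul_sum, Finset.sum_mul]
      refine Finset.sum_congr rfl fun ℓ _ => ?_
      rw [show (-(2 * (u.1^2+u.2^2)))^ℓ = (-2:ℝ)^ℓ * (u.1^2+u.2^2)^ℓ by
        rw [← neg_mul, mul_pow]]
      rw [show (-1:ℝ)*(u.1^2+u.2^2) = -(u.1^2+u.2^2) by ring]
      ring
    rw [hreal]
    push_cast
    rw [Finset.mul_sum]
    exact Finset.sum_congr rfl fun ℓ _ => by ring
  rw [integral_congr_ae (Filter.Eventually.of_forall hpt)]
  rw [integral_finset_sum _ (fun ℓ _ => ((integrable_integrand w.1 w.2 one_pos ℓ).const_mul _))]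
  simp_rw [integral_const_mul]
  have hlgi : ∀ ℓ ∈ Finset.range (k+1),
      (∫ u : ℝ × ℝ, (((u.1^2+u.2^2)^ℓ * Real.exp (-1*(u.1^2+u.2^2)) : ℝ) : ℂ)
        * Complex.exp (-Complex.I * ((w.1*u.1+w.2*u.2 : ℝ) : ℂ)))
      = ((lgr (w.1^2+w.2^2) ℓ 1 : ℝ) : ℂ) := by
    intro ℓ _
    exact lgi_eq_lgr w.1 w.2 ℓ 1 one_pos
  rw [Finset.sum_congr rfl (fun ℓ hℓ => by rw [hlgi ℓ hℓ])]
  -- now everything is real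
  rw [show ((2 * Real.pi : ℂ))⁻¹ = (((2*Real.pi)⁻¹ : ℝ) : ℂ) by push_cast; ring]
  have hterm : ∀ ℓ ∈ Finset.range (k+1),
      (1/Real.pi * (-1:ℝ)^k * (Nat.choose k ℓ) * (-2)^ℓ / (Nat.factorial ℓ))
        * lgr (w.1^2+w.2^2) ℓ 1
      = (-1:ℝ)^k * ((Nat.choose k ℓ : ℝ) * (-2)^ℓ
          * laguerre ℓ ((w.1^2+w.2^2)/(4*1)))
          * Real.exp (-((w.1^2+w.2^2)/(4*1))) := by
    intro ℓ _
    have hfne : ((Nat.factorial ℓ : ℝ)) ≠ 0 := by positivity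
    have hπ : (Real.pi : ℝ) ≠ 0 := Real.pi_ne_zero
    simp only [lgr, one_pow]
    field_simp
  have hsum : ∑ ℓ ∈ Finset.range (k+1),
      (1/Real.pi * (-1:ℝ)^k * (Nat.choose k ℓ) * (-2)^ℓ / (Nat.factorial ℓ))
        * lgr (w.1^2+w.2^2) ℓ 1
      = laguerre k (2*((w.1^2+w.2^2)/(4*1))) * Real.exp (-((w.1^2+w.2^2)/(4*1))) := by
    rw [Finset.sum_congr rfl hterm, ← Finset.sum_mul, ← Finset.mul_sum, lag_sum]
    have hkk : (-1:ℝ)^k * (-1)^k = 1 := by rw [← mul_pow]; norm_num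
    linear_combination (laguerre k (2*((w.1^2+w.2^2)/(4*1)))
      * Real.exp (-((w.1^2+w.2^2)/(4*1)))) * hkk
  have hreal : ((2*Real.pi)⁻¹ : ℝ) * ∑ ℓ ∈ Finset.range (k+1),
      (1/Real.pi * (-1:ℝ)^k * (Nat.choose k ℓ) * (-2)^ℓ / (Nat.factorial ℓ))
        * lgr (w.1^2+w.2^2) ℓ 1
      = (-1:ℝ)^k / 2 * wignerHermite k (w.1/2, w.2/2) := by
    rw [hsum]
    have harg1 : (2*((w.1^2+w.2^2)/(4*1))) = 2 * ((w.1/2)^2 + (w.2/2)^2) := by ring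
    have harg2 : (-((w.1^2+w.2^2)/(4*1))) = -((w.1/2)^2 + (w.2/2)^2) := by ring
    rw [harg1, harg2, wignerHermite]
    have hkk : (-1:ℝ)^k * (-1)^k = 1 := by rw [← mul_pow]; norm_num
    linear_combination (-(laguerre k (2*((w.1/2)^2+(w.2/2)^2))
      * Real.exp (-((w.1/2)^2+(w.2/2)^2))) / (2*Real.pi)) * hkk
  calc (((2*Real.pi)⁻¹ : ℝ) : ℂ) * ∑ ℓ ∈ Finset.range (k+1),
        ((1/Real.pi * (-1:ℝ)^k * (Nat.choose k ℓ) * (-2)^ℓ / (Nat.factorial ℓ) : ℝ) : ℂ)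
          * ((lgr (w.1^2+w.2^2) ℓ 1 : ℝ) : ℂ)
      = ((((2*Real.pi)⁻¹ : ℝ) * ∑ ℓ ∈ Finset.range (k+1),
          (1/Real.pi * (-1:ℝ)^k * (Nat.choose k ℓ) * (-2)^ℓ / (Nat.factorial ℓ))
            * lgr (w.1^2+w.2^2) ℓ 1 : ℝ) : ℂ) := by push_cast; ring
    _ = (((-1:ℝ)^k / 2 * wignerHermite k (w.1/2, w.2/2) : ℝ) : ℂ) := by rw [hreal]
    _ = (((-1) ^ k / 2 : ℝ) : ℂ) * (wignerHermite k (w.1 / 2, w.2 / 2) : ℂ) := by push_cast; ring
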